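/- arXiv:2003.12531 — 2 statements merged into one kernel-verified Lean document; each statement's English description precedes it below -/
import Mathlib

section
/- Let S and T be algebraic theories satisfying the hypotheses of the times-over-plus theorem, and additionally suppose the binary term ⋄ of S is idempotent (⋄(x,x) =_S x) as well as unital. Then there is no composite theory of T after S. In particular, there is no distributive law of the powerset monad over itself. -/
/-! ## Algebraic theories, equational logic, and composite theories (Pirog–Staton) -/

/-- An algebraic signature: a set of operation symbols with arities. -/
structure Sig : Type 1 where
  ops : Type
  ar : ops → ℕ

/-- Terms over a signature with variables in `X`. -/
inductive Tm (σ : Sig) (X : Type) : Type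
  | var : X → Tm σ X
  | op : (g : σ.ops) → (Fin (σ.ar g) → Tm σ X) → Tm σ X

/-- Simultaneous substitution of terms for variables. -/
def Tm.bind {σ : Sig} {X Y : Type} : Tm σ X → (X → Tm σ Y) → Tm σ Y
  | .var x, f => f x
  | .op g a, f => .op g fun i => (a i).bind f

/-- Substitution of variables for variables (renaming). -/
def Tm.rename {σ : Sig} {X Y : Type} (t : Tm σ X) (f : X → Y) : Tm σ Y :=
  t.bind fun x => .var (f x)

/-- The set of variables occurring in a term. -/
def Tm.vars {σ : Sig} {X : Type} : Tm σ X → Set X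
  | .var x => {x}
  | .op _ a => ⋃ i, (a i).vars

/-- An algebraic theory: a signature together with a set of equations
(pairs of terms over natural-number variables). -/
structure Theory : Type 1 where
  sig : Sig
  axioms : Tm sig ℕ → Tm sig ℕ → Prop

/-- Provable equality in equational logic from the axioms of a theory. -/
inductive Theory.Eq (Th : Theory) : {X : Type} → Tm Th.sig X → Tm Th.sig X → Prop
  | ax {X : Type} {l r : Tm Th.sig ℕ} (h : Th.axioms l r) (f : ℕ → Tm Th.sig X) :
      Theory.Eq Th (l.bind f) (r.bind f)
  | refl {X : Type} (t : Tm Th.sig X) : Theory.Eq Th t t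
  | symm {X : Type} {a b : Tm Th.sig X} : Theory.Eq Th a b → Theory.Eq Th b a
  | trans {X : Type} {a b c : Tm Th.sig X} :
      Theory.Eq Th a b → Theory.Eq Th b c → Theory.Eq Th a c
  | congr {X : Type} (g : Th.sig.ops) {a b : Fin (Th.sig.ar g) → Tm Th.sig X}
      (h : ∀ i, Theory.Eq Th (a i) (b i)) : Theory.Eq Th (.op g a) (.op g b)

/-- A theory is consistent if distinct variables are not provably equal. -/
def Theory.Consistent (Th : Theory) : Prop :=
  ∀ x y : ℕ, Th.Eq (X := ℕ) (.var x) (.var y) → x = y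

/-- Disjoint union of signatures. -/
def Sig.sum (σ τ : Sig) : Sig := ⟨σ.ops ⊕ τ.ops, Sum.elim σ.ar τ.ar⟩

/-- Embedding of terms of the left signature into the sum. -/
def Tm.inL {σ τ : Sig} {X : Type} : Tm σ X → Tm (σ.sum τ) X
  | .var x => .var x
  | .op g a => .op (Sum.inl g) fun i => Tm.inL (a i)

/-- Embedding of terms of the right signature into the sum. -/
def Tm.inR {σ τ : Sig} {X : Type} : Tm τ X → Tm (σ.sum τ) X
  | .var x => .var x
  | .op g a => .op (Sum.inr g) fun i => Tm.inR (a i)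

/-- A separated term `t[s_x/x]`: a `τ`-term `t` whose variables are substituted
by `σ`-terms `s x`. -/
def sep {σ τ : Sig} {X : Type} (t : Tm τ X) (s : X → Tm σ ℕ) : Tm (σ.sum τ) ℕ :=
  (Tm.inR t).bind fun x => Tm.inL (s x)

/-- Equality modulo `(T, S)` of two separated terms, in the sense of Pirog and Staton. -/
def EqMod (S T : Theory) {X X' : Type}
    (t : Tm T.sig X) (s : X → Tm S.sig ℕ)
    (t' : Tm T.sig X') (s' : X' → Tm S.sig ℕ) : Prop :=
  ∃ (Y : Type) (f₁ : X → Y) (f₂ : X' → Y) (sb : Y → Tm S.sig ℕ),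
    T.Eq (t.rename f₁) (t'.rename f₂) ∧
    (∀ x, S.Eq (s x) (sb (f₁ x))) ∧
    (∀ x', S.Eq (s' x') (sb (f₂ x')))

/-- A composite theory of `T` after `S`: a theory on the disjoint union of the
signatures, containing both `S` and `T`, in which every term is provably equal to
a separated term (a `T`-term of `S`-terms), essentially uniquely. -/
structure Composite (S T : Theory) where
  axioms : Tm (S.sig.sum T.sig) ℕ → Tm (S.sig.sum T.sig) ℕ → Prop
  containsS : ∀ {X : Type} (a b : Tm S.sig X), S.Eq a b →
    Theory.Eq ⟨S.sig.sum T.sig, axioms⟩ (Tm.inL a) (Tm.inL b)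
  containsT : ∀ {X : Type} (a b : Tm T.sig X), T.Eq a b →
    Theory.Eq ⟨S.sig.sum T.sig, axioms⟩ (Tm.inR a) (Tm.inR b)
  separation : ∀ u : Tm (S.sig.sum T.sig) ℕ,
    ∃ (X : Type) (t : Tm T.sig X) (s : X → Tm S.sig ℕ),
      Theory.Eq ⟨S.sig.sum T.sig, axioms⟩ u (sep t s)
  essentiallyUnique : ∀ {X X' : Type} (t : Tm T.sig X) (s : X → Tm S.sig ℕ)
      (t' : Tm T.sig X') (s' : X' → Tm S.sig ℕ),
      Theory.Eq ⟨S.sig.sum T.sig, axioms⟩ (sep t s) (sep t' s') →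
      EqMod S T t s t' s'

/-- The underlying theory of a composite. -/
def Composite.theory {S T : Theory} (C : Composite S T) : Theory :=
  ⟨S.sig.sum T.sig, C.axioms⟩

attribute [reducible] Composite.theory

/-- A set of terms is stable if it is closed under renaming of variables. -/
def Stable {σ : Sig} (Ts : Set (Tm σ ℕ)) : Prop :=
  ∀ t ∈ Ts, ∀ f : ℕ → ℕ, t.rename f ∈ Ts

/-- A set of terms is universal if every term is provably equal to one in the set. -/
def Universal (Th : Theory) (Ts : Set (Tm Th.sig ℕ)) : Prop :=
  ∀ t : Tm Th.sig ℕ, ∃ t' ∈ Ts, Th.Eq t t'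

/-- Apply a binary term (a term with variables among `0` and `1`) to two arguments. -/
def subst2 {σ : Sig} {X : Type} (b : Tm σ ℕ) (t u : Tm σ X) : Tm σ X :=
  b.bind fun i => if i = 0 then t else u

/-- Operations of the theory of join semilattices with bottom. -/
inductive JslOp : Type | bot | join

/-- Signature of join semilattices with bottom. -/
def JslSig : Sig := ⟨JslOp, fun o => match o with | .bot => 0 | .join => 2⟩

def Jsl.bot {X : Type} : Tm JslSig X := .op .bot Fin.elim0
def Jsl.join {X : Type} (t u : Tm JslSig X) : Tm JslSig X :=
  .op .join fun i => if i.val = 0 then t else u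

/-- Axioms of join semilattices with bottom: unit laws, associativity,
commutativity, idempotence. -/
inductive JslAx : Tm JslSig ℕ → Tm JslSig ℕ → Prop
  | unitL : JslAx (Jsl.join Jsl.bot (.var 0)) (.var 0)
  | unitR : JslAx (Jsl.join (.var 0) Jsl.bot) (.var 0)
  | assoc : JslAx (Jsl.join (Jsl.join (.var 0) (.var 1)) (.var 2))
                  (Jsl.join (.var 0) (Jsl.join (.var 1) (.var 2)))
  | comm : JslAx (Jsl.join (.var 0) (.var 1)) (Jsl.join (.var 1) (.var 0))
  | idem : JslAx (Jsl.join (.var 0) (.var 0)) (.var 0)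

/-- The theory of join semilattices with bottom, presenting the finite powerset monad. -/
def JSLTheory : Theory := ⟨JslSig, JslAx⟩

attribute [reducible] JSLTheory

/-! ### Auxiliary lemmas on terms and substitution -/

namespace NoGoAux

open Tm

section Plumbing

variable {σ τ : Sig} {X Y Z : Type}

theorem bind_assoc (t : Tm σ X) (f : X → Tm σ Y) (g : Y → Tm σ Z) :
    (t.bind f).bind g = t.bind (fun x => (f x).bind g) := by
  induction t with
  | var x => rfl
  | op o a ih => simp only [Tm.bind]; congr 1; funext i; exact ih i

theorem bind_congr {t : Tm σ X} {f g : X → Tm σ Y}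
    (h : ∀ x ∈ t.vars, f x = g x) : t.bind f = t.bind g := by
  induction t with
  | var x => exact h x rfl
  | op o a ih =>
    simp only [Tm.bind]; congr 1; funext i
    exact ih i (fun x hx => h x (Set.mem_iUnion.2 ⟨i, hx⟩))

theorem bind_var (t : Tm σ X) : t.bind (fun x => Tm.var x) = t := by
  induction t with
  | var x => rfl
  | op o a ih => simp only [Tm.bind]; congr 1; funext i; exact ih i

theorem bind_of_empty {t : Tm σ X} (h : t.vars = ∅) (f g : X → Tm σ Y) :
    t.bind f = t.bind g :=
  bind_congr (fun x hx => absurd (h ▸ hx) (Set.notMem_empty x))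

theorem bind_eq_self_of_empty {t : Tm σ X} (h : t.vars = ∅) (f : X → Tm σ X) :
    t.bind f = t := by
  rw [bind_of_empty h f (fun x => Tm.var x), bind_var]

theorem mem_vars_bind {y : Y} {t : Tm σ X} {f : X → Tm σ Y} :
    y ∈ (t.bind f).vars ↔ ∃ x ∈ t.vars, y ∈ (f x).vars := by
  induction t with
  | var x => simp [Tm.vars, Tm.bind]
  | op o a ih =>
    simp only [Tm.bind, Tm.vars, Set.mem_iUnion]
    constructor
    · rintro ⟨i, hi⟩
      rcases (ih i).1 hi with ⟨x, hx, hy⟩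
      exact ⟨x, ⟨i, hx⟩, hy⟩
    · rintro ⟨x, ⟨i, hi⟩, hy⟩
      exact ⟨i, (ih i).2 ⟨x, hi, hy⟩⟩

theorem mem_vars_rename {y : Y} {t : Tm σ X} {f : X → Y} :
    y ∈ (t.rename f).vars ↔ ∃ x ∈ t.vars, y = f x := by
  simp only [Tm.rename, mem_vars_bind, Tm.vars, Set.mem_singleton_iff]

theorem vars_rename_empty {t : Tm σ X} (h : t.vars = ∅) (f : X → Y) :
    (t.rename f).vars = ∅ := by
  ext y; simp only [mem_vars_rename, Set.mem_empty_iff_false, iff_false]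
  rintro ⟨x, hx, _⟩; exact absurd (h ▸ hx) (Set.notMem_empty x)

theorem inL_bind (a : Tm σ X) (f : X → Tm σ Y) :
    Tm.inL (τ := τ) (a.bind f) = (Tm.inL a).bind (fun x => Tm.inL (f x)) := by
  induction a with
  | var x => rfl
  | op o c ih => simp only [Tm.bind, Tm.inL]; congr 1; funext i; exact ih i

theorem inR_bind (a : Tm τ X) (f : X → Tm τ Y) :
    Tm.inR (σ := σ) (a.bind f) = (Tm.inR a).bind (fun x => Tm.inR (f x)) := by
  induction a with
  | var x => rfl
  | op o c ih => simp only [Tm.bind, Tm.inR]; congr 1; funext i; exact ih i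

theorem inL_vars (a : Tm σ X) : (Tm.inL (τ := τ) a).vars = a.vars := by
  induction a with
  | var x => rfl
  | op o c ih => simp only [Tm.inL, Tm.vars]; exact Set.iUnion_congr ih

theorem inR_vars (a : Tm τ X) : (Tm.inR (σ := σ) a).vars = a.vars := by
  induction a with
  | var x => rfl
  | op o c ih => simp only [Tm.inR, Tm.vars]; exact Set.iUnion_congr ih

theorem eq_bind {Th : Theory} {a b : Tm Th.sig X} (h : Th.Eq a b)
    {Y : Type} (f : X → Tm Th.sig Y) : Th.Eq (a.bind f) (b.bind f) := by
  induction h with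
  | ax hax g =>
    rw [bind_assoc, bind_assoc]
    exact Theory.Eq.ax hax _
  | refl t => exact Theory.Eq.refl _
  | symm _ ih => exact ih.symm
  | trans _ _ ih₁ ih₂ => exact ih₁.trans ih₂
  | congr g _ ih => exact Theory.Eq.congr g (fun i => ih i)

theorem eq_bind_pointwise {Th : Theory} (t : Tm Th.sig X) {f g : X → Tm Th.sig Y}
    (h : ∀ x, Th.Eq (f x) (g x)) : Th.Eq (t.bind f) (t.bind g) := by
  induction t with
  | var x => exact h x
  | op o a ih => exact Theory.Eq.congr o (fun i => ih i)

theorem sep_bind_inL {S T : Theory} (t : Tm T.sig X) (s : X → Tm S.sig ℕ)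
    (g : ℕ → Tm S.sig ℕ) :
    (sep t s).bind (fun y => Tm.inL (g y)) = sep t (fun x => (s x).bind g) := by
  unfold sep
  rw [bind_assoc]
  congr 1; funext x
  exact (inL_bind (s x) g).symm

end Plumbing

end NoGoAux
namespace NoGoAux

section Main

variable {S T : Theory} (C : Composite S T)

theorem var_bind {σ : Sig} {X Y : Type} (x : X) (f : X → Tm σ Y) :
    (Tm.var x).bind f = f x := rfl

/-- Consistency of the composite theory. -/
theorem u_consistent
    (hSvar : ∀ (a : Tm S.sig ℕ) (x : ℕ), S.Eq a (.var x) → a.vars ⊆ {x})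
    (hTvar : ∀ (a : Tm T.sig ℕ) (x : ℕ), T.Eq a (.var x) → a.vars ⊆ {x})
    {a b : ℕ} (h : C.theory.Eq (X := ℕ) (.var a) (.var b)) : a = b := by
  classical
  have hsep : C.theory.Eq
      (sep (.var 0 : Tm T.sig ℕ) (fun _ => (.var a : Tm S.sig ℕ)))
      (sep (.var 0 : Tm T.sig ℕ) (fun _ => (.var b : Tm S.sig ℕ))) := h
  obtain ⟨Y, f₁, f₂, sb, hT, hs1, hs2⟩ := C.essentiallyUnique _ _ _ _ hsep
  have hT' : T.Eq (X := Y) (.var (f₁ 0)) (.var (f₂ 0)) := hT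
  have heq : f₁ 0 = f₂ 0 := by
    by_contra hne
    have h2 := eq_bind hT'
      (fun y => if y = f₁ 0 then (.var 1 : Tm T.sig ℕ) else .var 0)
    rw [var_bind, var_bind, if_pos rfl, if_neg (fun hh => hne hh.symm)] at h2
    have hsub := hTvar _ _ h2
    have h1 : (1 : ℕ) ∈ (Tm.vars (.var 1 : Tm T.sig ℕ)) := rfl
    have := hsub h1
    exact one_ne_zero this
  have hab : S.Eq (.var a : Tm S.sig ℕ) (.var b) :=
    (hs1 0).trans (by rw [heq]; exact (hs2 0).symm)
  have := hSvar _ _ hab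
  exact this rfl

/-- Any `S`-term with variables contained in `{v}`, with `v` occurring,
is provably equal to `var v`. -/
theorem single_var_collapse
    (hSred : ∀ a : Tm S.sig ℕ, a.vars.Nonempty →
      ∃ f : ℕ → Tm S.sig ℕ, ∀ x ∈ a.vars,
        S.Eq (a.bind fun y => if y = x then .var x else f y) (.var x))
    {c : Tm S.sig ℕ} {v : ℕ} (hv : v ∈ c.vars) (hsub : c.vars ⊆ {v}) :
    S.Eq c (.var v) := by
  obtain ⟨f, hf⟩ := hSred c ⟨v, hv⟩
  have h := hf v hv
  have e : c.bind (fun y => if y = v then .var v else f y) = c := by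
    have e1 : c.bind (fun y => if y = v then .var v else f y)
        = c.bind (fun y => .var y) := by
      apply bind_congr; intro y hy
      have : y = v := hsub hy
      subst this; rw [if_pos rfl]
    rw [e1, bind_var]
  rwa [e] at h

end Main

end NoGoAux
namespace NoGoAux

section Main2

variable {S T : Theory} (C : Composite S T)

/-- η-absorption: substituting the `T`-unit for an occurring variable of an
`S`-term collapses the term to the `T`-unit, in the composite theory. -/
theorem eta_absorb
    (hSred : ∀ a : Tm S.sig ℕ, a.vars.Nonempty →
      ∃ f : ℕ → Tm S.sig ℕ, ∀ x ∈ a.vars,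
        S.Eq (a.bind fun y => if y = x then .var x else f y) (.var x))
    (hTconst : ∀ a b : Tm T.sig ℕ, a.vars = ∅ → T.Eq a b → b.vars = ∅)
    {eS : Tm S.sig ℕ} (heS : eS.vars = ∅)
    {eT : Tm T.sig ℕ} (heT : eT.vars = ∅)
    {c : Tm S.sig ℕ} {v : ℕ} (hv : v ∈ c.vars) :
    C.theory.Eq ((Tm.inL c).bind (fun y => if y = v then Tm.inR eT else .var y))
      (Tm.inR eT) := by
  classical
  obtain ⟨X, t0, s0, hA⟩ :=
    C.separation ((Tm.inL c).bind (fun y => if y = v then Tm.inR eT else .var y))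
  have hinRvar : ∀ y : ℕ, (Tm.inR (.var y : Tm T.sig ℕ) : Tm (S.sig.sum T.sig) ℕ) = .var y :=
    fun _ => rfl
  -- the collapsed S-term c₀
  have hc₀v : v ∈ (c.bind (fun y => if y = v then (.var v : Tm S.sig ℕ) else eS)).vars := by
    apply mem_vars_bind.2
    exact ⟨v, hv, by rw [if_pos rfl]; exact rfl⟩
  have hc₀sub : (c.bind (fun y => if y = v then (.var v : Tm S.sig ℕ) else eS)).vars ⊆ {v} := by
    intro y hy
    rcases mem_vars_bind.1 hy with ⟨x, hx, hyx⟩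
    by_cases hxv : x = v
    · subst hxv; rw [if_pos rfl] at hyx; exact hyx
    · rw [if_neg hxv, heS] at hyx; exact absurd hyx (Set.notMem_empty y)
  have hc₀ : S.Eq (c.bind (fun y => if y = v then (.var v : Tm S.sig ℕ) else eS)) (.var v) :=
    single_var_collapse hSred hc₀v hc₀sub
  -- value of the eS-substituted term
  have hB1 : ((Tm.inL c).bind (fun y => if y = v then Tm.inR eT else .var y)).bind
        (fun y => Tm.inL (if y = v then (.var v : Tm S.sig ℕ) else eS))
      = (Tm.inL (c.bind (fun y => if y = v then (.var v : Tm S.sig ℕ) else eS))).bind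
        (fun y => if y = v then Tm.inR eT else .var y) := by
    rw [bind_assoc, inL_bind, bind_assoc]
    apply bind_congr; intro y _
    by_cases hyv : y = v
    · rw [if_pos hyv, if_pos hyv,
        show (Tm.inL (.var v : Tm S.sig ℕ) : Tm (S.sig.sum T.sig) ℕ) = .var v from rfl,
        var_bind, if_pos rfl]
      exact bind_eq_self_of_empty (by rw [inR_vars]; exact heT) _
    · rw [if_neg hyv, if_neg hyv, var_bind, if_neg hyv]
      exact (bind_eq_self_of_empty (by rw [inL_vars]; exact heS) _).symm
  have hBval : C.theory.Eq
      (((Tm.inL c).bind (fun y => if y = v then Tm.inR eT else .var y)).bind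
        (fun y => Tm.inL (if y = v then (.var v : Tm S.sig ℕ) else eS)))
      (Tm.inR eT) := by
    rw [hB1]
    have h1 : C.theory.Eq
        (Tm.inL (c.bind (fun y => if y = v then (.var v : Tm S.sig ℕ) else eS)))
        (Tm.inL (.var v : Tm S.sig ℕ)) := C.containsS _ _ hc₀
    have h2 := eq_bind h1 (fun y => if y = v then Tm.inR eT else (.var y : Tm (S.sig.sum T.sig) ℕ))
    rw [show (Tm.inL (.var v : Tm S.sig ℕ) : Tm (S.sig.sum T.sig) ℕ) = .var v from rfl,
      var_bind, if_pos rfl] at h2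
    exact h2
  -- transport along the separated form
  have hsepB : C.theory.Eq
      (sep t0 (fun x => (s0 x).bind (fun y => if y = v then (.var v : Tm S.sig ℕ) else eS)))
      (Tm.inR eT) := by
    have h1 := eq_bind hA (fun y => Tm.inL (if y = v then (.var v : Tm S.sig ℕ) else eS))
    rw [sep_bind_inL] at h1
    exact h1.symm.trans hBval
  have hsepR : (sep eT (fun _ => (.var 0 : Tm S.sig ℕ))) = (Tm.inR eT : Tm (S.sig.sum T.sig) ℕ) := by
    unfold sep
    exact bind_eq_self_of_empty (by rw [inR_vars]; exact heT) _
  have hEU : C.theory.Eq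
      (sep t0 (fun x => (s0 x).bind (fun y => if y = v then (.var v : Tm S.sig ℕ) else eS)))
      (sep eT (fun _ => (.var 0 : Tm S.sig ℕ))) := by
    rw [hsepR]; exact hsepB
  obtain ⟨Y, f₁, f₂, sb, hT, hs1, hs2⟩ := C.essentiallyUnique _ _ _ _ hEU
  -- the T-part of the separated form is closed
  have ht0 : t0.vars = ∅ := by
    ext x
    simp only [Set.mem_empty_iff_false, iff_false]
    intro hx
    have h2 := eq_bind hT (fun y => if y = f₁ x then (.var 1 : Tm T.sig ℕ) else .var 0)
    have hR : ((eT.rename f₂).bind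
        (fun y => if y = f₁ x then (.var 1 : Tm T.sig ℕ) else .var 0)).vars = ∅ := by
      ext z
      simp only [Set.mem_empty_iff_false, iff_false]
      intro hz
      rcases mem_vars_bind.1 hz with ⟨y, hy, _⟩
      rw [vars_rename_empty heT] at hy
      exact absurd hy (Set.notMem_empty y)
    have h3 := hTconst _ _ hR h2.symm
    have hmem : (1 : ℕ) ∈ ((t0.rename f₁).bind
        (fun y => if y = f₁ x then (.var 1 : Tm T.sig ℕ) else .var 0)).vars := by
      apply mem_vars_bind.2
      exact ⟨f₁ x, mem_vars_rename.2 ⟨x, hx, rfl⟩, by rw [if_pos rfl]; exact rfl⟩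
    rw [h3] at hmem
    exact absurd hmem (Set.notMem_empty 1)
  have hsep_eq : sep t0 (fun x => (s0 x).bind (fun y => if y = v then (.var v : Tm S.sig ℕ) else eS))
      = sep t0 s0 := by
    unfold sep
    exact bind_of_empty (by rw [inR_vars]; exact ht0) _ _
  rw [hsep_eq] at hsepB
  exact hA.trans hsepB

end Main2

end NoGoAux
namespace NoGoAux

section Main3

variable {S T : Theory} (C : Composite S T)

/-- Substituting the `T`-unit for a variable in a separated term yields
(up to provable equality) another separated term, whose `S`-parts all come
from the original one. -/
theorem sep_eta
    (hSred : ∀ a : Tm S.sig ℕ, a.vars.Nonempty →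
      ∃ f : ℕ → Tm S.sig ℕ, ∀ x ∈ a.vars,
        S.Eq (a.bind fun y => if y = x then .var x else f y) (.var x))
    (hTconst : ∀ a b : Tm T.sig ℕ, a.vars = ∅ → T.Eq a b → b.vars = ∅)
    {eS : Tm S.sig ℕ} (heS : eS.vars = ∅)
    {eT : Tm T.sig ℕ} (heT : eT.vars = ∅)
    {X : Type} (t0 : Tm T.sig X) (s0 : X → Tm S.sig ℕ) (v : ℕ) :
    ∃ (X' : Type) (t' : Tm T.sig X') (s' : X' → Tm S.sig ℕ),
      C.theory.Eq ((sep t0 s0).bind (fun y => if y = v then Tm.inR eT else .var y))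
        (sep t' s') ∧
      ∀ x' ∈ t'.vars, ∃ x ∈ t0.vars, s' x' = s0 x := by
  classical
  refine ⟨Option X,
    t0.bind (fun x => if v ∈ (s0 x).vars then eT.rename (fun _ => (none : Option X))
      else .var (some x)),
    (fun o => Option.elim o (.var 0) s0), ?_, ?_⟩
  · have e1 : (sep t0 s0).bind (fun y => if y = v then Tm.inR eT else .var y)
        = (Tm.inR t0).bind (fun x => (Tm.inL (s0 x)).bind
            (fun y => if y = v then Tm.inR eT else .var y)) := by
      unfold sep; rw [bind_assoc]
    have e2 : sep (t0.bind (fun x => if v ∈ (s0 x).vars then eT.rename (fun _ => (none : Option X))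
          else .var (some x))) (fun o => Option.elim o (.var 0) s0)
        = (Tm.inR t0).bind (fun x => if v ∈ (s0 x).vars then Tm.inR eT else Tm.inL (s0 x)) := by
      unfold sep
      rw [inR_bind, bind_assoc]
      apply bind_congr; intro x _
      by_cases hx : v ∈ (s0 x).vars
      · rw [if_pos hx, if_pos hx]
        -- (inR (eT.rename cnone)).bind (inL ∘ s') = inR eT
        have e3 : (Tm.inR (eT.rename (fun _ => (none : Option X))) : Tm (S.sig.sum T.sig) (Option X))
            = (Tm.inR eT).bind (fun n => .var ((fun _ => (none : Option X)) n)) := by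
          unfold Tm.rename
          rw [inR_bind]
          rfl
        rw [e3, bind_assoc]
        have e4 : (Tm.inR eT : Tm (S.sig.sum T.sig) ℕ).bind
            (fun n => (Tm.var (none : Option X)).bind
              (fun o => Tm.inL (Option.elim o (.var 0) s0)))
            = (Tm.inR eT).bind (fun y => .var y) := by
          apply bind_of_empty
          rw [inR_vars]; exact heT
        rw [e4, bind_var]
      · rw [if_neg hx, if_neg hx]
        rfl
    rw [e1, e2]
    apply eq_bind_pointwise
    intro x
    by_cases hx : v ∈ (s0 x).vars
    · rw [if_pos hx]
      exact eta_absorb C hSred hTconst heS heT hx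
    · rw [if_neg hx]
      have e5 : (Tm.inL (s0 x)).bind (fun y => if y = v then Tm.inR eT else .var y)
          = Tm.inL (s0 x) := by
        have e6 : (Tm.inL (s0 x) : Tm (S.sig.sum T.sig) ℕ).bind
              (fun y => if y = v then Tm.inR eT else .var y)
            = (Tm.inL (s0 x)).bind (fun y => .var y) := by
          apply bind_congr; intro y hy
          rw [inL_vars] at hy
          exact if_neg (fun hyv => hx (by rw [← hyv]; exact hy))
        rw [e6, bind_var]
      rw [e5]
      exact Theory.Eq.refl _
  · intro x' hx'
    rcases mem_vars_bind.1 hx' with ⟨x, hx, hmem⟩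
    by_cases hv : v ∈ (s0 x).vars
    · rw [if_pos hv, vars_rename_empty heT] at hmem
      exact absurd hmem (Set.notMem_empty x')
    · rw [if_neg hv] at hmem
      have : x' = some x := hmem
      subst this
      exact ⟨x, hx, rfl⟩

end Main3

end NoGoAux
namespace NoGoAux

section Main4

variable {S T : Theory} (C : Composite S T)

/-- If a separated term is provably a variable, all its `S`-parts at occurring
positions are provably that variable. -/
theorem sep_eq_var
    (hTvar : ∀ (a : Tm T.sig ℕ) (x : ℕ), T.Eq a (.var x) → a.vars ⊆ {x})
    {X : Type} (t0 : Tm T.sig X) (s1 : X → Tm S.sig ℕ) (b : ℕ)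
    (h : C.theory.Eq (.var b : Tm (S.sig.sum T.sig) ℕ) (sep t0 s1)) :
    ∀ x ∈ t0.vars, S.Eq (s1 x) (.var b) := by
  classical
  have h' : C.theory.Eq
      (sep (.var 0 : Tm T.sig ℕ) (fun _ => (.var b : Tm S.sig ℕ))) (sep t0 s1) := h
  obtain ⟨Y, f₁, f₂, sb, hT, hs1, hs2⟩ := C.essentiallyUnique _ _ _ _ h'
  intro x hx
  -- hT : T.Eq (.var (f₁ 0)) (t0.rename f₂)
  have hf : f₂ x = f₁ 0 := by
    by_contra hne
    have h2 : T.Eq (X := ℕ)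
        (if f₁ 0 = f₂ x then (.var 1 : Tm T.sig ℕ) else .var 0)
        ((t0.rename f₂).bind fun y => if y = f₂ x then (.var 1 : Tm T.sig ℕ) else .var 0) :=
      eq_bind hT (fun y => if y = f₂ x then (.var 1 : Tm T.sig ℕ) else .var 0)
    rw [if_neg (fun hh => hne hh.symm)] at h2
    have hsub := hTvar _ _ h2.symm
    have hmem : (1 : ℕ) ∈ ((t0.rename f₂).bind
        (fun y => if y = f₂ x then (.var 1 : Tm T.sig ℕ) else .var 0)).vars := by
      apply mem_vars_bind.2
      exact ⟨f₂ x, mem_vars_rename.2 ⟨x, hx, rfl⟩, by rw [if_pos rfl]; exact rfl⟩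
    exact one_ne_zero (hsub hmem)
  exact (hs2 x).trans (by rw [hf]; exact (hs1 0).symm)

/-- Key structural facts about a separated form of the term `a ⋄ b`. -/
theorem w_facts
    (hSconst : ∀ a b : Tm S.sig ℕ, a.vars = ∅ → S.Eq a b → b.vars = ∅)
    (hSvar : ∀ (a : Tm S.sig ℕ) (x : ℕ), S.Eq a (.var x) → a.vars ⊆ {x})
    (hTvar : ∀ (a : Tm T.sig ℕ) (x : ℕ), T.Eq a (.var x) → a.vars ⊆ {x})
    {d eS : Tm S.sig ℕ} (heS : eS.vars = ∅)
    (hUR : S.Eq (subst2 d (.var 0) eS) (.var 0))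
    (hUL : S.Eq (subst2 d eS (.var 0)) (.var 0))
    {X : Type} (t0 : Tm T.sig X) (s0 : X → Tm S.sig ℕ) {a b : ℕ} (hab : a ≠ b)
    (h : C.theory.Eq (Tm.inL (subst2 d (.var a) (.var b))) (sep t0 s0)) :
    ∃ x ∈ t0.vars, a ∈ (s0 x).vars ∧ b ∈ (s0 x).vars := by
  classical
  -- substitution killing position a (image of the left unit law)
  have hS1 : S.Eq ((subst2 d (.var a) (.var b)).bind
      (fun y => if y = a then eS else .var y)) (.var b) := by
    have h0 := eq_bind hUL (fun _ => (.var b : Tm S.sig ℕ))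
    rw [var_bind] at h0
    have e : (subst2 d eS (.var 0)).bind (fun _ => (.var b : Tm S.sig ℕ))
        = (subst2 d (.var a) (.var b)).bind (fun y => if y = a then eS else .var y) := by
      unfold subst2
      rw [bind_assoc, bind_assoc]
      apply bind_congr; intro i _
      by_cases hi : i = 0
      · rw [if_pos hi, if_pos hi, var_bind, if_pos rfl]
        exact bind_eq_self_of_empty heS _
      · rw [if_neg hi, if_neg hi, var_bind, var_bind, if_neg (fun hh => hab hh.symm)]
    rw [e] at h0
    exact h0
  -- substitution killing position b (image of the right unit law)
  have hS2 : S.Eq ((subst2 d (.var a) (.var b)).bind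
      (fun y => if y = b then eS else .var y)) (.var a) := by
    have h0 := eq_bind hUR (fun _ => (.var a : Tm S.sig ℕ))
    rw [var_bind] at h0
    have e : (subst2 d (.var 0) eS).bind (fun _ => (.var a : Tm S.sig ℕ))
        = (subst2 d (.var a) (.var b)).bind (fun y => if y = b then eS else .var y) := by
      unfold subst2
      rw [bind_assoc, bind_assoc]
      apply bind_congr; intro i _
      by_cases hi : i = 0
      · rw [if_pos hi, if_pos hi, var_bind, var_bind, if_neg hab]
      · rw [if_neg hi, if_neg hi, var_bind, if_pos rfl]
        exact bind_eq_self_of_empty heS _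
    rw [e] at h0
    exact h0
  have hAa := eq_bind h (fun y => Tm.inL (if y = a then eS else (.var y : Tm S.sig ℕ)))
  rw [sep_bind_inL, ← inL_bind] at hAa
  have hAb := eq_bind h (fun y => Tm.inL (if y = b then eS else (.var y : Tm S.sig ℕ)))
  rw [sep_bind_inL, ← inL_bind] at hAb
  have hKeyb : C.theory.Eq (.var b : Tm (S.sig.sum T.sig) ℕ)
      (sep t0 (fun x => (s0 x).bind (fun y => if y = a then eS else .var y))) := by
    have h1 : C.theory.Eq
        (Tm.inL ((subst2 d (.var a) (.var b)).bind (fun y => if y = a then eS else .var y)))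
        (Tm.inL (.var b : Tm S.sig ℕ)) := C.containsS _ _ hS1
    exact h1.symm.trans hAa
  have hKeya : C.theory.Eq (.var a : Tm (S.sig.sum T.sig) ℕ)
      (sep t0 (fun x => (s0 x).bind (fun y => if y = b then eS else .var y))) := by
    have h1 : C.theory.Eq
        (Tm.inL ((subst2 d (.var a) (.var b)).bind (fun y => if y = b then eS else .var y)))
        (Tm.inL (.var a : Tm S.sig ℕ)) := C.containsS _ _ hS2
    exact h1.symm.trans hAb
  by_cases hne : ∃ x, x ∈ t0.vars
  · obtain ⟨x, hx⟩ := hne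
    refine ⟨x, hx, ?_, ?_⟩
    · -- a ∈ vars (s0 x)
      have hEq := sep_eq_var C hTvar t0 _ a hKeya x hx
      have hsubv := hSvar _ _ hEq
      have hmem : a ∈ ((s0 x).bind (fun y => if y = b then eS else .var y)).vars := by
        by_contra hbm
        have hempty : ((s0 x).bind (fun y => if y = b then eS else .var y)).vars = ∅ := by
          ext z
          simp only [Set.mem_empty_iff_false, iff_false]
          intro hz
          have hz' : z = a := hsubv hz
          subst hz'; exact hbm hz
        have h4 := hSconst _ _ hempty hEq
        have : a ∈ (Tm.vars (.var a : Tm S.sig ℕ)) := rfl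
        rw [h4] at this
        exact absurd this (Set.notMem_empty a)
      rcases mem_vars_bind.1 hmem with ⟨y, hy, hmem2⟩
      by_cases hyb : y = b
      · rw [if_pos hyb, heS] at hmem2
        exact absurd hmem2 (Set.notMem_empty a)
      · rw [if_neg hyb] at hmem2
        have : a = y := hmem2
        subst this; exact hy
    · -- b ∈ vars (s0 x)
      have hEq := sep_eq_var C hTvar t0 _ b hKeyb x hx
      have hsubv := hSvar _ _ hEq
      have hmem : b ∈ ((s0 x).bind (fun y => if y = a then eS else .var y)).vars := by
        by_contra hbm
        have hempty : ((s0 x).bind (fun y => if y = a then eS else .var y)).vars = ∅ := by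
          ext z
          simp only [Set.mem_empty_iff_false, iff_false]
          intro hz
          have hz' : z = b := hsubv hz
          subst hz'; exact hbm hz
        have h4 := hSconst _ _ hempty hEq
        have : b ∈ (Tm.vars (.var b : Tm S.sig ℕ)) := rfl
        rw [h4] at this
        exact absurd this (Set.notMem_empty b)
      rcases mem_vars_bind.1 hmem with ⟨y, hy, hmem2⟩
      by_cases hya : y = a
      · rw [if_pos hya, heS] at hmem2
        exact absurd hmem2 (Set.notMem_empty b)
      · rw [if_neg hya] at hmem2
        have : b = y := hmem2
        subst this; exact hy
  · -- t0 has no variables: contradiction with consistency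
    exfalso
    have hempty : (sep t0 s0).vars = ∅ := by
      ext z
      simp only [Set.mem_empty_iff_false, iff_false]
      intro hz
      rcases mem_vars_bind.1 hz with ⟨x, hx, _⟩
      rw [inR_vars] at hx
      exact hne ⟨x, hx⟩
    have e1 : ∀ g : ℕ → Tm (S.sig.sum T.sig) ℕ, (sep t0 s0).bind g = sep t0 s0 :=
      fun g => bind_eq_self_of_empty hempty g
    have hb' : C.theory.Eq (.var b : Tm (S.sig.sum T.sig) ℕ) (sep t0 s0) := by
      have := hKeyb
      rw [show sep t0 (fun x => (s0 x).bind (fun y => if y = a then eS else .var y))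
          = sep t0 s0 from by
        unfold sep; exact bind_of_empty (by rw [inR_vars]; ext z; simp only [Set.mem_empty_iff_false, iff_false]; exact fun hz => hne ⟨z, hz⟩) _ _] at this
      exact this
    have ha' : C.theory.Eq (.var a : Tm (S.sig.sum T.sig) ℕ) (sep t0 s0) := by
      have := hKeya
      rw [show sep t0 (fun x => (s0 x).bind (fun y => if y = b then eS else .var y))
          = sep t0 s0 from by
        unfold sep; exact bind_of_empty (by rw [inR_vars]; ext z; simp only [Set.mem_empty_iff_false, iff_false]; exact fun hz => hne ⟨z, hz⟩) _ _] at this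
      exact this
    exact hab (u_consistent C hSvar hTvar (ha'.trans hb'.symm))

end Main4

end NoGoAux
namespace NoGoAux

/-- The general no-go theorem. -/
theorem noGo_general (S T : Theory) (d eS : Tm S.sig ℕ)
    (hd : d.vars ⊆ {0, 1}) (heS : eS.vars = ∅)
    (hUR : S.Eq (subst2 d (.var 0) eS) (.var 0))
    (hUL : S.Eq (subst2 d eS (.var 0)) (.var 0))
    (hId : S.Eq (subst2 d (.var 0) (.var 0)) (.var 0))
    (hSconst : ∀ a b : Tm S.sig ℕ, a.vars = ∅ → S.Eq a b → b.vars = ∅)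
    (hSvar : ∀ (a : Tm S.sig ℕ) (x : ℕ), S.Eq a (.var x) → a.vars ⊆ {x})
    (hSred : ∀ a : Tm S.sig ℕ, a.vars.Nonempty →
      ∃ f : ℕ → Tm S.sig ℕ, ∀ x ∈ a.vars,
        S.Eq (a.bind fun y => if y = x then .var x else f y) (.var x))
    (t eT : Tm T.sig ℕ) (ht : t.vars ⊆ {0, 1}) (heT : eT.vars = ∅)
    (hTUR : T.Eq (subst2 t (.var 0) eT) (.var 0))
    (hTUL : T.Eq (subst2 t eT (.var 0)) (.var 0))
    (hTconst : ∀ a b : Tm T.sig ℕ, a.vars = ∅ → T.Eq a b → b.vars = ∅)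
    (hTvar : ∀ (a : Tm T.sig ℕ) (x : ℕ), T.Eq a (.var x) → a.vars ⊆ {x}) :
    IsEmpty (Composite S T) := by
  constructor
  intro C
  classical
  -- the mixed term J = (x₀ ⊗ x₁) ⋄ (x₂ ⊗ x₃)
  obtain ⟨X0, ρ, μ, hJ⟩ := C.separation
    ((Tm.inL d).bind (fun i => if i = 0 then Tm.inR t
      else Tm.inR (t.bind (fun j => if j = 0 then (.var 2 : Tm T.sig ℕ) else .var 3))))
  ------------------------------------------------------------------
  -- Part 1: substitute x₁ := η, x₂ := η; the result is x₀ ⋄ x₃.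
  ------------------------------------------------------------------
  obtain ⟨X1, ρ1, s1, hE1, hm1⟩ := sep_eta C hSred hTconst heS heT ρ μ 1
  obtain ⟨X2, ρ2, s2, hE2, hm2⟩ := sep_eta C hSred hTconst heS heT ρ1 s1 2
  have hchain : C.theory.Eq
      ((((Tm.inL d).bind (fun i => if i = 0 then Tm.inR t
          else Tm.inR (t.bind (fun j => if j = 0 then (.var 2 : Tm T.sig ℕ) else .var 3)))).bind
            (fun y => if y = 1 then Tm.inR eT else .var y)).bind
            (fun y => if y = 2 then Tm.inR eT else .var y))
      (sep ρ2 s2) := by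
    have h1 := eq_bind hJ (fun y => if y = 1 then Tm.inR eT else (.var y : Tm (S.sig.sum T.sig) ℕ))
    have h2 := eq_bind (h1.trans hE1)
      (fun y => if y = 2 then Tm.inR eT else (.var y : Tm (S.sig.sum T.sig) ℕ))
    exact h2.trans hE2
  -- composed substitution
  have hcomp : (((Tm.inL d).bind (fun i => if i = 0 then Tm.inR t
          else Tm.inR (t.bind (fun j => if j = 0 then (.var 2 : Tm T.sig ℕ) else .var 3)))).bind
            (fun y => if y = 1 then Tm.inR eT else .var y)).bind
            (fun y => if y = 2 then Tm.inR eT else .var y)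
      = ((Tm.inL d).bind (fun i => if i = 0 then Tm.inR t
          else Tm.inR (t.bind (fun j => if j = 0 then (.var 2 : Tm T.sig ℕ) else .var 3)))).bind
            (fun y => if y = 1 then Tm.inR eT else if y = 2 then Tm.inR eT else .var y) := by
    rw [bind_assoc]
    apply bind_congr; intro y _
    by_cases h1 : y = 1
    · rw [if_pos h1, if_pos h1]
      exact bind_eq_self_of_empty (by rw [inR_vars]; exact heT) _
    · rw [if_neg h1, var_bind, if_neg h1]
  -- value of the composed substitution: x₀ ⋄ x₃
  have hval : C.theory.Eq
      (((Tm.inL d).bind (fun i => if i = 0 then Tm.inR t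
          else Tm.inR (t.bind (fun j => if j = 0 then (.var 2 : Tm T.sig ℕ) else .var 3)))).bind
            (fun y => if y = 1 then Tm.inR eT else if y = 2 then Tm.inR eT else .var y))
      (Tm.inL (subst2 d (.var 0) (.var 3))) := by
    rw [bind_assoc]
    have etarget : Tm.inL (subst2 d (.var 0) (.var 3))
        = (Tm.inL d).bind (fun i => if i = 0 then (.var 0 : Tm (S.sig.sum T.sig) ℕ) else .var 3) := by
      unfold subst2
      rw [inL_bind]
      apply bind_congr; intro i _
      by_cases hi : i = 0
      · rw [if_pos hi, if_pos hi]; rfl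
      · rw [if_neg hi, if_neg hi]; rfl
    rw [etarget]
    apply eq_bind_pointwise
    intro i
    by_cases hi : i = 0
    · rw [if_pos hi, if_pos hi]
      have e1 : (Tm.inR t : Tm (S.sig.sum T.sig) ℕ).bind
            (fun y => if y = 1 then Tm.inR eT else if y = 2 then Tm.inR eT else .var y)
          = Tm.inR (subst2 t (.var 0) eT) := by
        rw [show (fun y => if y = 1 then Tm.inR eT else if y = 2 then Tm.inR eT
              else (.var y : Tm (S.sig.sum T.sig) ℕ))
            = (fun y => Tm.inR (if y = 1 then eT else if y = 2 then eT else (.var y : Tm T.sig ℕ)))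
            from by
          funext y
          by_cases h1 : y = 1
          · rw [if_pos h1, if_pos h1]
          · rw [if_neg h1, if_neg h1]
            by_cases h2 : y = 2
            · rw [if_pos h2, if_pos h2]
            · rw [if_neg h2, if_neg h2]; rfl]
        rw [← inR_bind]
        congr 1
        unfold subst2
        apply bind_congr; intro y hy
        rcases ht hy with h0 | h1
        · have hy0 : y = 0 := h0
          subst hy0
          rw [if_pos rfl, if_neg (by norm_num), if_neg (by norm_num)]
        · have hy1 : y = 1 := h1
          subst hy1
          rw [if_pos rfl, if_neg (by norm_num)]
      rw [e1]
      exact C.containsT _ _ hTUR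
    · rw [if_neg hi, if_neg hi]
      have e1 : (Tm.inR (t.bind (fun j => if j = 0 then (.var 2 : Tm T.sig ℕ) else .var 3))
              : Tm (S.sig.sum T.sig) ℕ).bind
            (fun y => if y = 1 then Tm.inR eT else if y = 2 then Tm.inR eT else .var y)
          = Tm.inR (t.bind (fun j => if j = 0 then eT else (.var 3 : Tm T.sig ℕ))) := by
        rw [show (fun y => if y = 1 then Tm.inR eT else if y = 2 then Tm.inR eT
              else (.var y : Tm (S.sig.sum T.sig) ℕ))
            = (fun y => Tm.inR (if y = 1 then eT else if y = 2 then eT else (.var y : Tm T.sig ℕ)))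
            from by
          funext y
          by_cases h1 : y = 1
          · rw [if_pos h1, if_pos h1]
          · rw [if_neg h1, if_neg h1]
            by_cases h2 : y = 2
            · rw [if_pos h2, if_pos h2]
            · rw [if_neg h2, if_neg h2]; rfl]
        rw [← inR_bind]
        congr 1
        rw [bind_assoc]
        apply bind_congr; intro j _
        by_cases hj : j = 0
        · rw [if_pos hj, if_pos hj, var_bind,
            if_neg (by norm_num : ¬(2 : ℕ) = 1), if_pos rfl]
        · rw [if_neg hj, if_neg hj, var_bind,
            if_neg (by norm_num : ¬(3 : ℕ) = 1), if_neg (by norm_num : ¬(3 : ℕ) = 2)]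
      rw [e1]
      have hstep : T.Eq (t.bind (fun j => if j = 0 then eT else (.var 3 : Tm T.sig ℕ))) (.var 3) := by
        have h0 := eq_bind hTUL (fun _ => (.var 3 : Tm T.sig ℕ))
        rw [var_bind] at h0
        have e : (subst2 t eT (.var 0)).bind (fun _ => (.var 3 : Tm T.sig ℕ))
            = t.bind (fun j => if j = 0 then eT else (.var 3 : Tm T.sig ℕ)) := by
          unfold subst2
          rw [bind_assoc]
          apply bind_congr; intro j _
          by_cases hj : j = 0
          · rw [if_pos hj, if_pos hj]
            exact bind_eq_self_of_empty heT _
          · rw [if_neg hj, if_neg hj, var_bind]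
        rw [e] at h0
        exact h0
      exact C.containsT _ _ hstep
  have hKeySep : C.theory.Eq (Tm.inL (subst2 d (.var 0) (.var 3))) (sep ρ2 s2) :=
    hval.symm.trans (hcomp ▸ hchain)
  obtain ⟨xstar, hxstar, h0mem, h3mem⟩ :=
    w_facts C hSconst hSvar hTvar heS hUR hUL ρ2 s2 (by norm_num : (0 : ℕ) ≠ 3) hKeySep
  obtain ⟨x1, hx1, hs21⟩ := hm2 xstar hxstar
  obtain ⟨xhat, hxhat, hs10⟩ := hm1 x1 hx1
  have h0v : (0 : ℕ) ∈ (μ xhat).vars := by rw [← hs10, ← hs21]; exact h0mem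
  have h3v : (3 : ℕ) ∈ (μ xhat).vars := by rw [← hs10, ← hs21]; exact h3mem
  ------------------------------------------------------------------
  -- Part 2: substitute x₂ := x₀, x₃ := x₁; the result is x₀ ⊗ x₁ by idempotence.
  ------------------------------------------------------------------
  have hJσ : ((Tm.inL d).bind (fun i => if i = 0 then Tm.inR t
        else Tm.inR (t.bind (fun j => if j = 0 then (.var 2 : Tm T.sig ℕ) else .var 3)))).bind
        (fun y => (.var (if y = 2 then 0 else if y = 3 then 1 else y) : Tm (S.sig.sum T.sig) ℕ))
      = (Tm.inL d).bind (fun _ => Tm.inR t) := by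
    rw [bind_assoc]
    apply bind_congr; intro i _
    by_cases hi : i = 0
    · rw [if_pos hi]
      rw [show (fun y => (.var (if y = 2 then 0 else if y = 3 then 1 else y)
            : Tm (S.sig.sum T.sig) ℕ))
          = (fun y => Tm.inR (.var (if y = 2 then 0 else if y = 3 then 1 else y) : Tm T.sig ℕ))
          from rfl, ← inR_bind]
      congr 1
      have e1 : t.bind (fun y => (.var (if y = 2 then 0 else if y = 3 then 1 else y) : Tm T.sig ℕ))
          = t.bind (fun y => .var y) := by
        apply bind_congr; intro y hy
        rcases ht hy with h0 | h1
        · have hy0 : y = 0 := h0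
          subst hy0
          rw [if_neg (by norm_num : ¬(0:ℕ) = 2), if_neg (by norm_num : ¬(0:ℕ) = 3)]
        · have hy1 : y = 1 := h1
          subst hy1
          rw [if_neg (by norm_num : ¬(1:ℕ) = 2), if_neg (by norm_num : ¬(1:ℕ) = 3)]
      rw [e1, bind_var]
    · rw [if_neg hi]
      rw [show (fun y => (.var (if y = 2 then 0 else if y = 3 then 1 else y)
            : Tm (S.sig.sum T.sig) ℕ))
          = (fun y => Tm.inR (.var (if y = 2 then 0 else if y = 3 then 1 else y) : Tm T.sig ℕ))
          from rfl, ← inR_bind]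
      congr 1
      rw [bind_assoc]
      have e1 : t.bind (fun j => ((if j = 0 then (.var 2 : Tm T.sig ℕ) else .var 3)).bind
            (fun y => (.var (if y = 2 then 0 else if y = 3 then 1 else y) : Tm T.sig ℕ)))
          = t.bind (fun j => .var j) := by
        apply bind_congr; intro j hj
        rcases ht hj with h0 | h1
        · have hj0 : j = 0 := h0
          subst hj0
          rw [if_pos rfl, var_bind, if_pos rfl]
        · have hj1 : j = 1 := h1
          subst hj1
          rw [if_neg (by norm_num : ¬(1:ℕ) = 0), var_bind,
            if_neg (by norm_num : ¬(3:ℕ) = 2), if_pos rfl]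
      rw [e1, bind_var]
  have hidem : C.theory.Eq ((Tm.inL d).bind (fun _ => (Tm.inR t : Tm (S.sig.sum T.sig) ℕ)))
      (Tm.inR t) := by
    have h1 := C.containsS _ _ hId
    have h2 := eq_bind h1 (fun _ => (Tm.inR t : Tm (S.sig.sum T.sig) ℕ))
    have e : (Tm.inL (subst2 d (.var 0) (.var 0))).bind (fun _ => (Tm.inR t : Tm (S.sig.sum T.sig) ℕ))
        = (Tm.inL d).bind (fun _ => Tm.inR t) := by
      unfold subst2
      rw [inL_bind, bind_assoc]
      apply bind_congr; intro i _
      by_cases hi : i = 0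
      · rw [if_pos hi]; rfl
      · rw [if_neg hi]; rfl
    rw [e] at h2
    exact h2
  have hIkey : C.theory.Eq (sep ρ (fun x => (μ x).rename (fun y => if y = 2 then 0 else if y = 3 then 1 else y)))
      (sep t (fun n => (.var n : Tm S.sig ℕ))) := by
    have h1 := eq_bind hJ
      (fun y => (.var (if y = 2 then 0 else if y = 3 then 1 else y) : Tm (S.sig.sum T.sig) ℕ))
    rw [hJσ] at h1
    have e2 : (sep ρ μ).bind
        (fun y => (.var (if y = 2 then 0 else if y = 3 then 1 else y) : Tm (S.sig.sum T.sig) ℕ))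
        = sep ρ (fun x => (μ x).rename (fun y => if y = 2 then 0 else if y = 3 then 1 else y)) := by
      rw [show (fun y => (.var (if y = 2 then 0 else if y = 3 then 1 else y)
            : Tm (S.sig.sum T.sig) ℕ))
          = (fun y => Tm.inL (.var (if y = 2 then 0 else if y = 3 then 1 else y) : Tm S.sig ℕ))
          from rfl]
      exact sep_bind_inL _ _ _
    have e3 : sep t (fun n => (.var n : Tm S.sig ℕ)) = (Tm.inR t : Tm (S.sig.sum T.sig) ℕ) := by
      unfold sep
      rw [show (fun x => Tm.inL (.var x : Tm S.sig ℕ)) = (fun x => (.var x : Tm (S.sig.sum T.sig) ℕ))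
          from rfl, bind_var]
    rw [e2] at h1
    rw [e3]
    exact h1.symm.trans hidem
  obtain ⟨Y, f₁, f₂, sb, hT, hsl, hsr⟩ := C.essentiallyUnique _ _ _ _ hIkey
  -- the two images of the ⊗-variables are distinct
  have hg : f₂ 0 ≠ f₂ 1 := by
    intro hgeq
    have hS01 : S.Eq (.var 0 : Tm S.sig ℕ) (.var 1) :=
      (hsr 0).trans (by rw [hgeq]; exact (hsr 1).symm)
    have := hSvar _ _ hS01
    exact one_ne_zero (this rfl).symm
  -- no-junk: every variable of ρ maps to one of the ⊗-variables
  have hjunk : f₁ xhat = f₂ 0 ∨ f₁ xhat = f₂ 1 := by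
    by_contra hcon
    push_neg at hcon
    obtain ⟨hn0, hn1⟩ := hcon
    have h2 := eq_bind hT (fun y => if y = f₂ 0 ∨ y = f₂ 1 then eT
      else if y = f₁ xhat then (.var 1 : Tm T.sig ℕ) else .var 0)
    have eR : (t.rename f₂).bind (fun y => if y = f₂ 0 ∨ y = f₂ 1 then eT
          else if y = f₁ xhat then (.var 1 : Tm T.sig ℕ) else .var 0)
        = t.bind (fun _ => eT) := by
      unfold Tm.rename
      rw [bind_assoc]
      apply bind_congr; intro y hy
      rcases ht hy with h0 | h1
      · have hy0 : y = 0 := h0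
        subst hy0
        rw [var_bind, if_pos (Or.inl rfl)]
      · have hy1 : y = 1 := h1
        subst hy1
        rw [var_bind, if_pos (Or.inr rfl)]
    have hTclosed : T.Eq (t.bind (fun _ => eT)) eT := by
      have h0 := eq_bind hTUR (fun _ => (eT : Tm T.sig ℕ))
      rw [var_bind] at h0
      have e : (subst2 t (.var 0) eT).bind (fun _ => (eT : Tm T.sig ℕ))
          = t.bind (fun _ => eT) := by
        unfold subst2
        rw [bind_assoc]
        apply bind_congr; intro i _
        by_cases hi : i = 0
        · rw [if_pos hi, var_bind]
        · rw [if_neg hi]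
          exact bind_eq_self_of_empty heT _
      rw [e] at h0
      exact h0
    rw [eR] at h2
    have h3 : T.Eq eT ((ρ.rename f₁).bind (fun y => if y = f₂ 0 ∨ y = f₂ 1 then eT
        else if y = f₁ xhat then (.var 1 : Tm T.sig ℕ) else .var 0)) :=
      hTclosed.symm.trans h2.symm
    have h4 := hTconst _ _ heT h3
    have hmem : (1 : ℕ) ∈ ((ρ.rename f₁).bind (fun y => if y = f₂ 0 ∨ y = f₂ 1 then eT
        else if y = f₁ xhat then (.var 1 : Tm T.sig ℕ) else .var 0)).vars := by
      apply mem_vars_bind.2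
      refine ⟨f₁ xhat, mem_vars_rename.2 ⟨xhat, hxhat, rfl⟩, ?_⟩
      rw [if_neg (by push_neg; exact ⟨hn0, hn1⟩), if_pos rfl]
      exact rfl
    rw [h4] at hmem
    exact absurd hmem (Set.notMem_empty 1)
  -- final clash
  rcases hjunk with hcase | hcase
  · have hSe : S.Eq ((μ xhat).rename (fun y => if y = 2 then 0 else if y = 3 then 1 else y))
        (.var 0) := (hsl xhat).trans (by rw [hcase]; exact (hsr 0).symm)
    have hsub := hSvar _ _ hSe
    have hmem : (1 : ℕ) ∈ ((μ xhat).rename (fun y => if y = 2 then 0 else if y = 3 then 1 else y)).vars := by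
      apply mem_vars_rename.2
      exact ⟨3, h3v, by norm_num⟩
    exact one_ne_zero (hsub hmem)
  · have hSe : S.Eq ((μ xhat).rename (fun y => if y = 2 then 0 else if y = 3 then 1 else y))
        (.var 1) := (hsl xhat).trans (by rw [hcase]; exact (hsr 1).symm)
    have hsub := hSvar _ _ hSe
    have hmem : (0 : ℕ) ∈ ((μ xhat).rename (fun y => if y = 2 then 0 else if y = 3 then 1 else y)).vars := by
      apply mem_vars_rename.2
      exact ⟨0, h0v, by norm_num⟩
    exact one_ne_zero (hsub hmem).symm

end NoGoAux
namespace NoGoAux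

/-! ### Facts about the theory of join semilattices -/

section Jsl

variable {X : Type}

theorem bot_bind {Y : Type} (f : X → Tm JslSig Y) :
    (Jsl.bot : Tm JslSig X).bind f = Jsl.bot := by
  unfold Jsl.bot
  simp only [Tm.bind]
  congr 1
  funext i
  exact i.elim0

theorem join_bind {Y : Type} (a b : Tm JslSig X) (f : X → Tm JslSig Y) :
    (Jsl.join a b).bind f = Jsl.join (a.bind f) (b.bind f) := by
  unfold Jsl.join
  simp only [Tm.bind]
  congr 1
  funext i
  exact apply_ite (fun z : Tm JslSig X => z.bind f) _ a b

theorem vars_var {Z : Type} (x : Z) : (Tm.var x : Tm JslSig Z).vars = {x} := rfl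

theorem vars_bot : (Jsl.bot : Tm JslSig X).vars = ∅ := by
  unfold Jsl.bot
  show (⋃ i : Fin 0, (Fin.elim0 i : Tm JslSig X).vars) = ∅
  exact Set.iUnion_of_empty _

theorem vars_join (a b : Tm JslSig X) :
    (Jsl.join a b).vars = a.vars ∪ b.vars := by
  unfold Jsl.join
  show (⋃ i : Fin 2, (if (i : Fin 2).val = 0 then a else b).vars) = _
  ext y
  simp only [Set.mem_iUnion, Set.mem_union]
  constructor
  · rintro ⟨i, hi⟩
    by_cases h : (i : Fin 2).val = 0
    · rw [if_pos h] at hi; exact Or.inl hi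
    · rw [if_neg h] at hi; exact Or.inr hi
  · rintro (h | h)
    · exact ⟨0, by rw [if_pos (show ((0 : Fin 2) : ℕ) = 0 from rfl)]; exact h⟩
    · exact ⟨1, by rw [if_neg (show ¬((1 : Fin 2) : ℕ) = 0 by decide)]; exact h⟩

theorem op_join_eta (brr : Fin 2 → Tm JslSig X) :
    Tm.op JslOp.join brr = Jsl.join (brr 0) (brr 1) := by
  unfold Jsl.join
  congr 1
  funext i
  by_cases h : (i : Fin 2).val = 0
  · rw [if_pos h]
    exact congrArg brr (Fin.ext (by simpa using h))
  · rw [if_neg h]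
    refine congrArg brr (Fin.ext ?_)
    have hlt : i.val < 2 := i.isLt
    have h1 : ((1 : Fin 2) : ℕ) = 1 := rfl
    omega

theorem jslAx_eq {l r : Tm JslSig ℕ} (h : JslAx l r) : JSLTheory.Eq l r := by
  have := Theory.Eq.ax (Th := JSLTheory) h (fun n => .var n)
  rwa [bind_var, bind_var] at this

theorem jsl_unitR (u : Tm JslSig X) : JSLTheory.Eq (Jsl.join u Jsl.bot) u := by
  have := Theory.Eq.ax (Th := JSLTheory) JslAx.unitR (fun _ => u)
  rwa [join_bind, bot_bind, var_bind] at this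

theorem jsl_unitL (u : Tm JslSig X) : JSLTheory.Eq (Jsl.join Jsl.bot u) u := by
  have := Theory.Eq.ax (Th := JSLTheory) JslAx.unitL (fun _ => u)
  rwa [join_bind, bot_bind, var_bind] at this

theorem jsl_idem (u : Tm JslSig X) : JSLTheory.Eq (Jsl.join u u) u := by
  have := Theory.Eq.ax (Th := JSLTheory) JslAx.idem (fun _ => u)
  rwa [join_bind, var_bind] at this

theorem join_congr {a a' b b' : Tm JslSig X}
    (h1 : JSLTheory.Eq a a') (h2 : JSLTheory.Eq b b') :
    JSLTheory.Eq (Jsl.join a b) (Jsl.join a' b') := by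
  unfold Jsl.join
  refine Theory.Eq.congr _ (fun i => ?_)
  by_cases h : (i : Fin 2).val = 0
  · rw [if_pos h, if_pos h]; exact h1
  · rw [if_neg h, if_neg h]; exact h2

/-- Provable equality in JSL preserves the set of variables. -/
theorem jsl_eq_vars {a b : Tm JslSig X} (h : JSLTheory.Eq a b) : a.vars = b.vars := by
  revert a b
  show ∀ {a b : Tm JSLTheory.sig X}, JSLTheory.Eq a b → a.vars = b.vars
  intro a b h
  induction h with
  | @ax l r hax f =>
    have hlr : l.vars = r.vars := by
      cases hax <;>
        simp [vars_join, vars_bot, vars_var, Set.union_assoc, Set.union_comm,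
          Set.union_self, Set.empty_union, Set.union_empty]
    ext y
    simp only [mem_vars_bind]
    rw [hlr]
  | refl t => rfl
  | symm _ ih => exact ih.symm
  | trans _ _ ih1 ih2 => exact ih1.trans ih2
  | congr g _ ih =>
    show (⋃ i, _) = (⋃ i, _)
    exact Set.iUnion_congr ih

/-- Reducibility of JSL terms: substituting ⊥ for all other variables. -/
theorem jsl_red (x : ℕ) (a : Tm JslSig ℕ) :
    (x ∈ a.vars → JSLTheory.Eq (a.bind (fun y => if y = x then .var x else Jsl.bot)) (.var x)) ∧
    (x ∉ a.vars → JSLTheory.Eq (a.bind (fun y => if y = x then .var x else Jsl.bot)) Jsl.bot) := by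
  induction a with
  | var y =>
    constructor
    · intro hx
      have hyx : x = y := hx
      rw [var_bind, if_pos hyx.symm, hyx]
      exact Theory.Eq.refl _
    · intro hx
      have hyx : ¬(y = x) := fun hh => hx (by rw [hh]; exact rfl)
      rw [var_bind, if_neg hyx]
      exact Theory.Eq.refl _
  | op g arr ih =>
    cases g with
    | bot =>
      constructor
      · intro hx
        exfalso
        rcases Set.mem_iUnion.1 hx with ⟨i, _⟩
        exact i.elim0
      · intro _
        show JSLTheory.Eq (Tm.op JslOp.bot _) Jsl.bot
        rw [show Tm.op JslOp.bot (fun i => (arr i).bind (fun y => if y = x then (.var x : Tm JslSig ℕ) else Jsl.bot)) = Jsl.bot from by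
          unfold Jsl.bot; congr 1; funext i; exact i.elim0]
        exact Theory.Eq.refl _
    | join =>
      have heta : @Tm.op JslSig ℕ JslOp.join arr = Jsl.join (arr (0 : Fin 2)) (arr (1 : Fin 2)) :=
        op_join_eta arr
      have hmem : x ∈ (@Tm.op JslSig ℕ JslOp.join arr).vars ↔
          x ∈ (arr (0 : Fin 2)).vars ∨ x ∈ (arr (1 : Fin 2)).vars := by
        rw [heta, vars_join]; exact Set.mem_union _ _ _
      constructor
      · intro hx
        rw [heta, join_bind]
        rcases hmem.1 hx with h0 | h1
        · by_cases h1' : x ∈ (arr (1 : Fin 2)).vars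
          · exact (join_congr ((ih (0 : Fin 2)).1 h0) ((ih (1 : Fin 2)).1 h1')).trans (jsl_idem _)
          · exact (join_congr ((ih (0 : Fin 2)).1 h0) ((ih (1 : Fin 2)).2 h1')).trans (jsl_unitR _)
        · by_cases h0' : x ∈ (arr (0 : Fin 2)).vars
          · exact (join_congr ((ih (0 : Fin 2)).1 h0') ((ih (1 : Fin 2)).1 h1)).trans (jsl_idem _)
          · exact (join_congr ((ih (0 : Fin 2)).2 h0') ((ih (1 : Fin 2)).1 h1)).trans (jsl_unitL _)
      · intro hx
        rw [heta, join_bind]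
        have h0 : x ∉ (arr (0 : Fin 2)).vars := fun hh => hx (hmem.2 (Or.inl hh))
        have h1 : x ∉ (arr (1 : Fin 2)).vars := fun hh => hx (hmem.2 (Or.inr hh))
        exact (join_congr ((ih (0 : Fin 2)).2 h0) ((ih (1 : Fin 2)).2 h1)).trans (jsl_unitR _)

end Jsl

end NoGoAux
namespace NoGoAux

theorem jsl_d_vars : (Jsl.join (.var 0) (.var 1) : Tm JslSig ℕ).vars ⊆ {0, 1} := by
  rw [vars_join, vars_var, vars_var]
  intro y hy
  rcases hy with h | h
  · exact Or.inl h
  · exact Or.inr h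

theorem jsl_unit_right :
    JSLTheory.Eq (subst2 (Jsl.join (.var 0) (.var 1)) (.var 0) Jsl.bot) (.var 0) := by
  unfold subst2
  rw [join_bind, var_bind, var_bind, if_pos rfl, if_neg (by norm_num : ¬(1 : ℕ) = 0)]
  exact jslAx_eq JslAx.unitR

theorem jsl_unit_left :
    JSLTheory.Eq (subst2 (Jsl.join (.var 0) (.var 1)) Jsl.bot (.var 0)) (.var 0) := by
  unfold subst2
  rw [join_bind, var_bind, var_bind, if_pos rfl, if_neg (by norm_num : ¬(1 : ℕ) = 0)]
  exact jslAx_eq JslAx.unitL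

theorem jsl_idem' :
    JSLTheory.Eq (subst2 (Jsl.join (.var 0) (.var 1)) (.var 0) (.var 0)) (.var 0) := by
  unfold subst2
  rw [join_bind, var_bind, var_bind, if_pos rfl, if_neg (by norm_num : ¬(1 : ℕ) = 0)]
  exact jslAx_eq JslAx.idem

theorem jsl_const (a b : Tm JslSig ℕ) (ha : a.vars = ∅) (h : JSLTheory.Eq a b) :
    b.vars = ∅ := by
  rw [← jsl_eq_vars h]; exact ha

theorem jsl_var (a : Tm JslSig ℕ) (x : ℕ) (h : JSLTheory.Eq a (.var x)) :
    a.vars ⊆ {x} := by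
  rw [jsl_eq_vars h, vars_var]

theorem jsl_reducible (a : Tm JslSig ℕ) (_ : a.vars.Nonempty) :
    ∃ f : ℕ → Tm JslSig ℕ, ∀ x ∈ a.vars,
      JSLTheory.Eq (a.bind fun y => if y = x then .var x else f y) (.var x) :=
  ⟨fun _ => Jsl.bot, fun x hx => (jsl_red x a).1 hx⟩

end NoGoAux
/-- no-go: idempotence and units. Under the hypotheses of the
times-over-plus theorem, if the binary term `⋄` of `S` is additionally idempotent,
then there is no composite theory of `T` after `S`. In particular there is no
composite of the theory of join semilattices with itself, i.e. no distributive law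
of the powerset monad over itself. -/
theorem noGo_idempotence_and_units :
    (∀ (S T : Theory) (d eS : Tm S.sig ℕ),
      d.vars ⊆ {0, 1} → eS.vars = ∅ →
      -- e_⋄ is a unit for ⋄
      S.Eq (subst2 d (.var 0) eS) (.var 0) →
      S.Eq (subst2 d eS (.var 0)) (.var 0) →
      -- ⋄ is idempotent
      S.Eq (subst2 d (.var 0) (.var 0)) (.var 0) →
      -- in S, terms equal to constants have no variables
      (∀ a b : Tm S.sig ℕ, a.vars = ∅ → S.Eq a b → b.vars = ∅) →
      -- in S, terms equal to a variable contain only that variable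
      (∀ (a : Tm S.sig ℕ) (x : ℕ), S.Eq a (.var x) → a.vars ⊆ {x}) →
      -- every S-term with a variable is reducible to any of its variables
      (∀ a : Tm S.sig ℕ, a.vars.Nonempty →
        ∃ f : ℕ → Tm S.sig ℕ, ∀ x ∈ a.vars,
          S.Eq (a.bind fun y => if y = x then .var x else f y) (.var x)) →
      ∀ (t eT : Tm T.sig ℕ), t.vars ⊆ {0, 1} → eT.vars = ∅ →
      -- e_⊗ is a unit for ⊗
      T.Eq (subst2 t (.var 0) eT) (.var 0) →
      T.Eq (subst2 t eT (.var 0)) (.var 0) →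
      -- in T, terms equal to constants have no variables
      (∀ a b : Tm T.sig ℕ, a.vars = ∅ → T.Eq a b → b.vars = ∅) →
      -- in T, terms equal to a variable contain only that variable
      (∀ (a : Tm T.sig ℕ) (x : ℕ), T.Eq a (.var x) → a.vars ⊆ {x}) →
      IsEmpty (Composite S T)) ∧
    IsEmpty (Composite JSLTheory JSLTheory) := by
  constructor
  · intro S T d eS hd heS h1 h2 h3 h4 h5 h6 t eT ht heT g1 g2 g3 g4
    exact NoGoAux.noGo_general S T d eS hd heS h1 h2 h3 h4 h5 h6 t eT ht heT g1 g2 g3 g4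
  · exact NoGoAux.noGo_general JSLTheory JSLTheory
      (Jsl.join (.var 0) (.var 1)) Jsl.bot
      NoGoAux.jsl_d_vars NoGoAux.vars_bot
      NoGoAux.jsl_unit_right NoGoAux.jsl_unit_left NoGoAux.jsl_idem'
      NoGoAux.jsl_const NoGoAux.jsl_var NoGoAux.jsl_reducible
      (Jsl.join (.var 0) (.var 1)) Jsl.bot
      NoGoAux.jsl_d_vars NoGoAux.vars_bot
      NoGoAux.jsl_unit_right NoGoAux.jsl_unit_left
      NoGoAux.jsl_const NoGoAux.jsl_var
end

section
/- There is no distributive law of type A ∘ L ⇒ L ∘ A for the Abelian group monad over the list monad; equivalently, there is no composite theory of the theory of monoids after the theory of Abelian groups. (This confirms Beck's conjecture that 'plus does not distribute over times'.) -/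
/-- Operations of the theory of monoids. -/
inductive MonOp : Type | e | mul

/-- Signature of monoids: a constant and a binary operation. -/
def MonSig : Sig := ⟨MonOp, fun o => match o with | .e => 0 | .mul => 2⟩

def Mon.one {X : Type} : Tm MonSig X := .op .e Fin.elim0
def Mon.mul {X : Type} (t u : Tm MonSig X) : Tm MonSig X :=
  .op .mul fun i => if i.val = 0 then t else u

/-- Axioms of monoids: unit laws and associativity. -/
inductive MonAx : Tm MonSig ℕ → Tm MonSig ℕ → Prop
  | unitL : MonAx (Mon.mul Mon.one (.var 0)) (.var 0)
  | unitR : MonAx (Mon.mul (.var 0) Mon.one) (.var 0)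
  | assoc : MonAx (Mon.mul (Mon.mul (.var 0) (.var 1)) (.var 2))
                  (Mon.mul (.var 0) (Mon.mul (.var 1) (.var 2)))

/-- The algebraic theory of monoids, presenting the list monad. -/
def MonTheory : Theory := ⟨MonSig, MonAx⟩

/-- Operations of the theory of Abelian groups. -/
inductive AbOp : Type | zero | neg | add

/-- Signature of Abelian groups. -/
def AbSig : Sig := ⟨AbOp, fun o => match o with | .zero => 0 | .neg => 1 | .add => 2⟩

def Ab.zero {X : Type} : Tm AbSig X := .op .zero Fin.elim0
def Ab.neg {X : Type} (t : Tm AbSig X) : Tm AbSig X := .op .neg fun _ => t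
def Ab.add {X : Type} (t u : Tm AbSig X) : Tm AbSig X :=
  .op .add fun i => if i.val = 0 then t else u

/-- Axioms of Abelian groups. -/
inductive AbAx : Tm AbSig ℕ → Tm AbSig ℕ → Prop
  | unitL : AbAx (Ab.add Ab.zero (.var 0)) (.var 0)
  | unitR : AbAx (Ab.add (.var 0) Ab.zero) (.var 0)
  | assoc : AbAx (Ab.add (Ab.add (.var 0) (.var 1)) (.var 2))
                 (Ab.add (.var 0) (Ab.add (.var 1) (.var 2)))
  | comm : AbAx (Ab.add (.var 0) (.var 1)) (Ab.add (.var 1) (.var 0))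
  | inv : AbAx (Ab.add (.var 0) (Ab.neg (.var 0))) Ab.zero

/-- The algebraic theory of Abelian groups, presenting the Abelian group monad. -/
def AbTheory : Theory := ⟨AbSig, AbAx⟩

/-! ### Auxiliary development -/

theorem Tm.bind_var {σ : Sig} {X : Type} : ∀ t : Tm σ X, t.bind Tm.var = t
  | .var _ => rfl
  | .op g a => by simp only [Tm.bind]; exact congrArg _ (funext fun i => (a i).bind_var)

theorem Tm.bind_bind {σ : Sig} {X Y Z : Type} (f : X → Tm σ Y) (g : Y → Tm σ Z) :
    ∀ t : Tm σ X, (t.bind f).bind g = t.bind fun x => (f x).bind g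
  | .var _ => rfl
  | .op h a => by
      simp only [Tm.bind]; exact congrArg _ (funext fun i => Tm.bind_bind f g (a i))

theorem eq_bind {Th : Theory} {X : Type} {a b : Tm Th.sig X} (h : Th.Eq a b) :
    ∀ {Y : Type} (f : X → Tm Th.sig Y), Th.Eq (a.bind f) (b.bind f) := by
  induction h with
  | ax hax g =>
      intro Y f
      rw [Tm.bind_bind, Tm.bind_bind]
      exact .ax hax _
  | refl t => intro Y f; exact .refl _
  | symm _ ih => intro Y f; exact (ih f).symm
  | trans _ _ ih1 ih2 => intro Y f; exact (ih1 f).trans (ih2 f)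
  | congr g _ ih => intro Y f; exact .congr g fun i => ih i f

theorem ax' {Th : Theory} {l r : Tm Th.sig ℕ} (h : Th.axioms l r) : Th.Eq l r := by
  have := Theory.Eq.ax h Tm.var
  rwa [Tm.bind_var, Tm.bind_var] at this

/-! ### The free monoid (word) model of the theory of monoids -/

/-- Evaluation of a monoid term as a word (list of variables). -/
def mw {X : Type} : Tm MonSig X → List X
  | .var x => [x]
  | .op .e _ => []
  | .op .mul a => mw (a (0 : Fin 2)) ++ mw (a (1 : Fin 2))

theorem mw_var {X : Type} (x : X) : mw (Tm.var (σ := MonSig) x) = [x] := rfl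

theorem mw_one {X : Type} : mw (Mon.one : Tm MonSig X) = [] := rfl

theorem mw_mul {X : Type} (t u : Tm MonSig X) : mw (Mon.mul t u) = mw t ++ mw u := rfl

theorem flatMap_singleton_map {X Y : Type} (f : X → Y) (l : List X) :
    (l.flatMap fun x => [f x]) = l.map f := by
  induction l <;> simp_all

theorem mw_bind {X Y : Type} (f : X → Tm MonSig Y) :
    ∀ t : Tm MonSig X, mw (t.bind f) = (mw t).flatMap fun x => mw (f x)
  | .var x => by simp [mw, Tm.bind]
  | .op .e a => by simp [mw, Tm.bind]
  | .op .mul a => by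
      simp only [Tm.bind, mw, List.flatMap_append]
      rw [mw_bind f (a (0 : Fin 2)), mw_bind f (a (1 : Fin 2))]

theorem mw_sound {X : Type} {a b : Tm MonTheory.sig X} (h : MonTheory.Eq a b) : mw a = mw b := by
  induction h with
  | ax hax f =>
      refine (mw_bind f _).trans (Eq.trans ?_ (mw_bind f _).symm)
      cases hax <;> simp [mw_mul, mw_one, mw_var]
  | refl t => rfl
  | symm _ ih => exact ih.symm
  | trans _ _ ih1 ih2 => exact ih1.trans ih2
  | congr g h ih =>
      cases g with
      | e => rfl
      | mul => simp only [mw]; rw [ih (0 : Fin 2), ih (1 : Fin 2)]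

theorem mw_rename {X Y : Type} (f : X → Y) (t : Tm MonSig X) :
    mw (t.rename f) = (mw t).map f := by
  rw [Tm.rename, mw_bind]
  simp only [mw_var, flatMap_singleton_map]

theorem var_bind {σ : Sig} {X Y : Type} (f : X → Tm σ Y) (x : X) :
    (Tm.var (σ := σ) x).bind f = f x := rfl

theorem one_bind {X Y : Type} (f : X → Tm MonSig Y) :
    Mon.one.bind f = (Mon.one : Tm MonSig Y) := by
  simp only [Mon.one, Tm.bind]
  exact congrArg _ (funext fun i => i.elim0)

theorem mul_bind {X Y : Type} (f : X → Tm MonSig Y) (t u : Tm MonSig X) :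
    (Mon.mul t u).bind f = Mon.mul (t.bind f) (u.bind f) := by
  simp only [Mon.mul, Tm.bind]
  exact congrArg _ (funext fun i => by by_cases hi : (i : ℕ) = 0 <;> simp [hi])

theorem mul_one_one {X : Type} :
    MonTheory.Eq (Mon.mul Mon.one Mon.one) (Mon.one : Tm MonSig X) := by
  have := Theory.Eq.ax (Th := MonTheory) (X := X) MonAx.unitL fun _ => Mon.one
  change MonTheory.Eq (Tm.bind (σ := MonSig) (Mon.mul Mon.one (Tm.var 0)) fun _ => Mon.one) (Tm.bind (σ := MonSig) (Tm.var 0) fun _ => Mon.one) at this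
  simpa [mul_bind, one_bind, var_bind] using this

theorem eq_one_of_mw_nil {X : Type} :
    ∀ t : Tm MonSig X, mw t = [] → MonTheory.Eq t (Mon.one : Tm MonSig X)
  | .var x, h => by simp [mw_var] at h
  | .op .e a, _ => by
      have : a = Fin.elim0 := funext fun i => i.elim0
      rw [this]; exact .refl _
  | .op .mul a, h => by
      have hn : mw (a (0 : Fin 2)) = [] ∧ mw (a (1 : Fin 2)) = [] := by
        simpa [mw] using h
      have h0 := eq_one_of_mw_nil (a (0 : Fin 2)) hn.1
      have h1 := eq_one_of_mw_nil (a (1 : Fin 2)) hn.2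
      have step1 : MonTheory.Eq (.op .mul a) (Mon.mul Mon.one Mon.one) := by
        have he : (Mon.mul (Mon.one : Tm MonSig X) Mon.one) =
            .op .mul (fun i => if (i : ℕ) = 0 then Mon.one else Mon.one) := rfl
        rw [he]
        refine Theory.Eq.congr _ fun i => ?_
        rw [ite_self]
        obtain ⟨iv, hlt⟩ := i
        have hlt' : iv < 2 := hlt
        match iv, hlt' with
        | 0, _ => exact h0
        | 1, _ => exact h1
      exact step1.trans mul_one_one

/-! ### The composite signature and mixed terms -/

def ESig : Sig := Sig.sum AbSig MonSig

def E.zero {X : Type} : Tm ESig X := .op (Sum.inl .zero) Fin.elim0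
def E.neg {X : Type} (t : Tm ESig X) : Tm ESig X := .op (Sum.inl .neg) fun _ => t
def E.add {X : Type} (t u : Tm ESig X) : Tm ESig X :=
  .op (Sum.inl .add) fun i => if (i : ℕ) = 0 then t else u
def E.one {X : Type} : Tm ESig X := .op (Sum.inr .e) Fin.elim0

theorem inL_var' {X : Type} (x : X) :
    Tm.inL (σ := AbSig) (τ := MonSig) (.var x) = (.var x : Tm ESig X) := rfl

theorem inL_zero {X : Type} :
    Tm.inL (σ := AbSig) (τ := MonSig) (Ab.zero (X := X)) = (E.zero : Tm ESig X) := by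
  simp only [Ab.zero, Tm.inL, E.zero]
  exact congrArg _ (funext fun i => i.elim0)

theorem inL_neg {X : Type} (t : Tm AbSig X) :
    Tm.inL (σ := AbSig) (τ := MonSig) (Ab.neg t) = E.neg t.inL := rfl

theorem inL_add {X : Type} (t u : Tm AbSig X) :
    Tm.inL (σ := AbSig) (τ := MonSig) (Ab.add t u) = E.add t.inL u.inL := by
  simp only [Ab.add, Tm.inL, E.add]
  exact congrArg _ (funext fun i => by by_cases hi : (i : ℕ) = 0 <;> simp [hi])

theorem inR_one {X : Type} :
    Tm.inR (σ := AbSig) (τ := MonSig) (Mon.one (X := X)) = (E.one : Tm ESig X) := by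
  simp only [Mon.one, Tm.inR, E.one]
  exact congrArg _ (funext fun i => i.elim0)

theorem Ezero_bind {X Y : Type} (f : X → Tm ESig Y) : E.zero.bind f = (E.zero : Tm ESig Y) := by
  simp only [E.zero, Tm.bind]
  exact congrArg _ (funext fun i => i.elim0)

theorem Eone_bind {X Y : Type} (f : X → Tm ESig Y) : E.one.bind f = (E.one : Tm ESig Y) := by
  simp only [E.one, Tm.bind]
  exact congrArg _ (funext fun i => i.elim0)

theorem Eneg_bind {X Y : Type} (f : X → Tm ESig Y) (t : Tm ESig X) :
    (E.neg t).bind f = E.neg (t.bind f) := rfl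

theorem Eadd_bind {X Y : Type} (f : X → Tm ESig Y) (t u : Tm ESig X) :
    (E.add t u).bind f = E.add (t.bind f) (u.bind f) := by
  simp only [E.add, Tm.bind]
  exact congrArg _ (funext fun i => by by_cases hi : (i : ℕ) = 0 <;> simp [hi])

theorem inL_bind_inL {X Y : Type} (g : X → Tm AbSig Y) :
    ∀ w : Tm AbSig X,
      (Tm.inL (σ := AbSig) (τ := MonSig) w).bind (fun x => Tm.inL (g x)) = Tm.inL (w.bind g)
  | .var x => rfl
  | .op h a => by
      simp only [Tm.inL, Tm.bind]
      exact congrArg _ (funext fun i => inL_bind_inL g (a i))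

theorem sep_one {X : Type} (s : X → Tm AbSig ℕ) :
    sep (Mon.one : Tm MonSig X) s = (E.one : Tm ESig ℕ) := by
  unfold sep
  rw [inR_one]; exact Eone_bind _

theorem sep_var {X : Type} (x : X) (s : X → Tm AbSig ℕ) :
    sep (.var x : Tm MonSig X) s = Tm.inL (s x) := rfl

theorem sep_bind_zero {X : Type} (t : Tm MonSig X) (s : X → Tm AbSig ℕ) :
    (sep t s).bind (fun _ : ℕ => (E.zero : Tm ESig ℕ)) =
      sep t (fun x => (s x).bind fun _ => Ab.zero) := by
  unfold sep
  refine (Tm.bind_bind (σ := ESig) _ _ _).trans ?_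
  congr 1
  funext x
  calc (Tm.inL (s x)).bind (fun _ : ℕ => (E.zero : Tm ESig ℕ))
      = (Tm.inL (s x)).bind (fun n : ℕ => Tm.inL ((fun _ : ℕ => Ab.zero) n)) := by
        rw [← inL_zero]
    _ = Tm.inL ((s x).bind fun _ => Ab.zero) := inL_bind_inL _ (s x)

/-! ### Derived mixed equations in any composite theory -/

abbrev EThy (C : Composite AbTheory MonTheory) : Theory := ⟨ESig, C.axioms⟩

variable (C : Composite AbTheory MonTheory)

theorem E_unitL (a : Tm ESig ℕ) : (EThy C).Eq (E.add E.zero a) a := by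
  have h : (EThy C).Eq (Tm.inL (σ := AbSig) (τ := MonSig) (Ab.add Ab.zero (.var 0)))
      (Tm.inL (σ := AbSig) (τ := MonSig) (.var 0)) :=
    C.containsS _ _ (ax' (Th := AbTheory) AbAx.unitL)
  rw [inL_add, inL_zero, inL_var'] at h
  have h2 := eq_bind h (fun _ => a)
  rwa [Eadd_bind, Ezero_bind, var_bind] at h2

theorem E_inv (a : Tm ESig ℕ) : (EThy C).Eq (E.add a (E.neg a)) E.zero := by
  have h : (EThy C).Eq (Tm.inL (σ := AbSig) (τ := MonSig) (Ab.add (.var 0) (Ab.neg (.var 0))))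
      (Tm.inL (σ := AbSig) (τ := MonSig) Ab.zero) :=
    C.containsS _ _ (ax' (Th := AbTheory) AbAx.inv)
  rw [inL_add, inL_neg, inL_zero, inL_var'] at h
  have h2 := eq_bind h (fun _ => a)
  rwa [Eadd_bind, Eneg_bind, var_bind, Ezero_bind] at h2

theorem E_comm (a b : Tm ESig ℕ) : (EThy C).Eq (E.add a b) (E.add b a) := by
  have h : (EThy C).Eq (Tm.inL (σ := AbSig) (τ := MonSig) (Ab.add (.var 0) (.var 1)))
      (Tm.inL (σ := AbSig) (τ := MonSig) (Ab.add (.var 1) (.var 0))) :=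
    C.containsS _ _ (ax' (Th := AbTheory) AbAx.comm)
  rw [inL_add, inL_add, inL_var', inL_var'] at h
  have h2 := eq_bind h (fun n => if n = 0 then a else b)
  rw [Eadd_bind, Eadd_bind, var_bind, var_bind] at h2
  simpa using h2
/-- There is no composite theory of the theory of monoids after
the theory of Abelian groups; equivalently (by Pirog–Staton), there is no
distributive law `A ∘ L ⇒ L ∘ A` of the Abelian group monad over the list monad
(Beck's conjecture). -/
theorem no_composite_monoids_after_abelian_groups :
    IsEmpty (Composite AbTheory MonTheory) := by
  refine ⟨fun C => ?_⟩
  -- Separate the mixed term `x + 1`.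
  obtain ⟨X, t0, s0, h1⟩ := C.separation (E.add (.var 0) E.one)
  have h1' : (EThy C).Eq (E.add (.var 0) (E.one : Tm ESig ℕ))
      (sep (t0 : Tm MonSig X) (s0 : X → Tm AbSig ℕ)) := h1
  -- Substitute `x := 0` to get `1 ≈ sep t0 s1`.
  have h2 := eq_bind h1' (fun _ : ℕ => (E.zero : Tm ESig ℕ))
  rw [Eadd_bind, var_bind, Eone_bind] at h2
  replace h2 := h2.trans (Theory.Eq.refl _ |> cast (congrArg (fun z => (EThy C).Eq z _) (sep_bind_zero t0 s0).symm))
  set s1 : X → Tm AbSig ℕ := fun x => (s0 x).bind fun _ => Ab.zero with hs1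
  have h3 : (EThy C).Eq (E.one : Tm ESig ℕ) (sep (t0 : Tm MonSig X) s1) :=
    ((E_unitL C E.one).symm).trans h2
  have h4 : (EThy C).Eq (sep (Mon.one : Tm MonSig X) s1) (sep (t0 : Tm MonSig X) s1) := by
    rw [sep_one]; exact h3
  -- Essential uniqueness forces the monoid part `t0` to be provably `1`.
  obtain ⟨Y, f₁, f₂, sb, hT, -, -⟩ := C.essentiallyUnique Mon.one s1 t0 s1 h4
  have hw : mw ((Mon.one : Tm MonSig X).rename f₁) = mw ((t0 : Tm MonSig X).rename f₂) :=
    mw_sound hT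
  have e1 : (Mon.one : Tm MonSig X).rename f₁ = Mon.one := one_bind _
  have e2 : mw ((t0 : Tm MonSig X).rename f₂) = (mw (t0 : Tm MonSig X)).map f₂ :=
    mw_rename f₂ t0
  rw [e1, e2, mw_one] at hw
  have hnil : mw (t0 : Tm MonSig X) = [] := by simpa using hw.symm
  have ht1 : MonTheory.Eq (t0 : Tm MonSig X) Mon.one := eq_one_of_mw_nil t0 hnil
  -- Hence `x + 1 ≈ 1` in the composite theory.
  have h5 : (EThy C).Eq (Tm.inR (σ := AbSig) (τ := MonSig) (t0 : Tm MonSig X))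
      (Tm.inR (σ := AbSig) (τ := MonSig) (Mon.one : Tm MonSig X)) :=
    C.containsT _ _ ht1
  have h6 : (EThy C).Eq (sep (t0 : Tm MonSig X) (s0 : X → Tm AbSig ℕ)) E.one := by
    have h := eq_bind h5 (fun x => Tm.inL (σ := AbSig) (τ := MonSig) (s0 x))
    rw [inR_one] at h
    replace h := cast (congrArg (fun z => (EThy C).Eq (sep (t0 : Tm MonSig X) s0) z) (Eone_bind (X := X) (fun x => Tm.inL (σ := AbSig) (τ := MonSig) (s0 x)))) h
    exact h
  have h7 : (EThy C).Eq (E.add (.var 0) (E.one : Tm ESig ℕ)) E.one := h1'.trans h6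
  -- Substitute `x := -1` to get `0 ≈ 1`.
  have h8 := eq_bind h7 (fun _ : ℕ => E.neg (E.one : Tm ESig ℕ))
  rw [Eadd_bind, var_bind, Eone_bind] at h8
  have h9 : (EThy C).Eq (E.zero : Tm ESig ℕ) E.one :=
    ((E_inv C E.one).symm).trans ((E_comm C E.one (E.neg E.one)).trans h8)
  have h10 : (EThy C).Eq (sep (.var 0 : Tm MonSig ℕ) (fun _ => Ab.zero))
      (sep (Mon.one : Tm MonSig ℕ) (fun _ => Ab.zero)) := by
    rw [sep_var, inL_zero, sep_one]; exact h9
  -- Essential uniqueness now equates a variable with `1` in the monoid theory: absurd.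
  obtain ⟨Y', g₁, g₂, sb', hT', -, -⟩ :=
    C.essentiallyUnique (.var 0) (fun _ => Ab.zero) Mon.one (fun _ => Ab.zero) h10
  have hww := mw_sound hT'
  have e3 : (Tm.var (σ := MonSig) 0).rename g₁ = .var (g₁ 0) := rfl
  have e4 : (Mon.one : Tm MonSig ℕ).rename g₂ = Mon.one := one_bind _
  have hww' : mw (Tm.var (σ := MonSig) (g₁ 0)) = mw (Mon.one : Tm MonSig Y') :=
    (congrArg mw e3).symm.trans (hww.trans (congrArg mw e4))
  rw [mw_var, mw_one] at hww'
  exact absurd hww' (by simp)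
end
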